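/- Let 0 < p < 1/2, ε > 0 and β > 0. If μ ∈ ℝ satisfies G_{p,ε}(β,μ) = 1−p, then μ > 1 + ε/2. -/
import Mathlib

noncomputable def G (p ε β μ : ℝ) : ℝ :=
  1 / 2 + (1 / 2) * (p * Real.tanh (β * (μ - ε - 1) / 2) +
    (1 - p) * Real.tanh (β * (μ - 1) / 2))

lemma tanh_lt_one' (x : ℝ) : Real.tanh x < 1 := by
  rw [Real.tanh_eq_sinh_div_cosh, div_lt_one (Real.cosh_pos x)]
  exact Real.sinh_lt_cosh x

lemma neg_one_lt_tanh' (x : ℝ) : -1 < Real.tanh x := by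
  have := tanh_lt_one' (-x)
  rw [show Real.tanh (-x) = -Real.tanh x from Real.tanh_neg x] at this
  linarith

lemma tanh_le_tanh' {a b : ℝ} (h : a ≤ b) : Real.tanh a ≤ Real.tanh b := by
  rw [Real.tanh_eq_sinh_div_cosh, Real.tanh_eq_sinh_div_cosh,
    div_le_div_iff₀ (Real.cosh_pos a) (Real.cosh_pos b)]
  have h1 : 0 ≤ Real.sinh (b - a) := by
    have := Real.sinh_strictMono.monotone (show (0:ℝ) ≤ b - a by linarith)
    simpa using this
  have h2 := Real.sinh_sub b a
  nlinarith

theorem stmt_2 (p ε β μ : ℝ) (hp : 0 < p) (hp1 : p < 1 / 2) (hε : 0 < ε) (hβ : 0 < β)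
    (hG : G p ε β μ = 1 - p) : 1 + ε / 2 < μ := by
  by_contra h
  push_neg at h
  set a := β * (μ - ε - 1) / 2 with ha
  set b := β * (μ - 1) / 2 with hb
  have hS : p * Real.tanh a + (1 - p) * Real.tanh b = 1 - 2 * p := by
    unfold G at hG; linarith
  have hab : b ≤ -a := by
    rw [ha, hb]
    have : β * (μ - 1) / 2 + β * (μ - ε - 1) / 2 = β * ((μ - 1) + (μ - ε - 1)) / 2 := by ring
    nlinarith
  have ha0 : a < 0 := by
    have : μ - ε - 1 < 0 := by linarith
    have := mul_neg_of_pos_of_neg hβ this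
    linarith
  have hta : Real.tanh a < 0 := by
    have := tanh_le_tanh' (le_of_lt ha0)
    have h2 : Real.tanh a ≤ Real.tanh 0 := tanh_le_tanh' (le_of_lt ha0)
    rw [Real.tanh_zero] at h2
    rcases lt_or_eq_of_le h2 with h3 | h3
    · exact h3
    · exfalso
      -- tanh a = 0 with a < 0: show tanh a < tanh 0 strictly
      have : Real.sinh a < 0 := Real.sinh_neg_iff.2 ha0
      rw [Real.tanh_eq_sinh_div_cosh] at h3
      have := div_neg_of_neg_of_pos this (Real.cosh_pos a)
      linarith
  have htb : Real.tanh b ≤ -Real.tanh a := by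
    have := tanh_le_tanh' hab
    rwa [Real.tanh_neg] at this
  have hneg : -Real.tanh a < 1 := by
    have := neg_one_lt_tanh' a; linarith
  nlinarith [hS, htb, hneg, hta]
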